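/- arXiv:2307.10226 — 5 statements merged into one kernel-verified Lean document; each statement's English description precedes it below -/
import Mathlib

section
/- For any first-order sentence F whose predicate constants are p = p1,…,pn and any interpretation I of its signature, I satisfies SM[F] if and only if I satisfies the second-order sentence F ∧ ∀u((u ≤ p) ∧ Nonempty(u) → ¬NES_F(u)), where the second-order quantifier ∀u ranges over all tuples u = u1,…,un of relations on the universe of I of the same arities as p. -/
set_option linter.unusedVariables false

namespace SMLF

/-- Terms: object variables (named by naturals) and object constants.
There are no function constants of positive arity. -/
inductive Term (C : Type) where
  | var : ℕ → Term C
  | const : C → Term C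

variable {C P D : Type} {ar : P → ℕ}

def Term.eval (cI : C → D) (v : ℕ → D) : Term C → D
  | .var x => v x
  | .const c => cI c

def Term.vars : Term C → Set ℕ
  | .var x => {x}
  | .const _ => ∅

def Term.consts : Term C → Set C
  | .var _ => ∅
  | .const c => {c}

def Term.subst (θ : ℕ → Term C) : Term C → Term C
  | .var x => θ x
  | .const c => .const c

def Term.isVar : Term C → Prop
  | .var _ => True
  | .const _ => False

/-- A (non-equality) atom `p(t₁,…,tₖ)`. -/
abbrev Atom (C P : Type) (ar : P → ℕ) := Σ p : P, Fin (ar p) → Term C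

def Atom.subst (θ : ℕ → Term C) (a : Atom C P ar) : Atom C P ar :=
  ⟨a.1, fun i => (a.2 i).subst θ⟩

def Atom.vars (a : Atom C P ar) : Set ℕ := {x | ∃ i, a.2 i = Term.var x}

/-- An interpretation of the predicate constants over universe `D`
(also used for tuples `u` of predicate variables). -/
def PredI (P : Type) (ar : P → ℕ) (D : Type) : Type := ∀ p : P, (Fin (ar p) → D) → Prop

/-- `u ≤ p` : conjunction of ∀x(uᵢ(x) → pᵢ(x)). -/
def PredI.le (uI pI : PredI P ar D) : Prop := ∀ p xs, uI p xs → pI p xs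

/-- `u = p` : conjunction of ∀x(uᵢ(x) ↔ pᵢ(x)). -/
def PredI.eqv (uI pI : PredI P ar D) : Prop := ∀ p xs, uI p xs ↔ pI p xs

/-- `u < p` : (u ≤ p) ∧ ¬(u = p). -/
def PredI.lt (uI pI : PredI P ar D) : Prop := PredI.le uI pI ∧ ¬ PredI.eqv uI pI

/-- `Nonempty(u)` : ∃x¹ u₁(x¹) ∨ … ∨ ∃xⁿ uₙ(xⁿ). -/
def PredI.nonemp (uI : PredI P ar D) : Prop := ∃ p xs, uI p xs

/-- First-order formulas (¬F is shorthand for F → ⊥). -/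
inductive Fml (C P : Type) (ar : P → ℕ) where
  | atom : (p : P) → (Fin (ar p) → Term C) → Fml C P ar
  | eq : Term C → Term C → Fml C P ar
  | bot : Fml C P ar
  | and : Fml C P ar → Fml C P ar → Fml C P ar
  | or : Fml C P ar → Fml C P ar → Fml C P ar
  | imp : Fml C P ar → Fml C P ar → Fml C P ar
  | all : ℕ → Fml C P ar → Fml C P ar
  | ex : ℕ → Fml C P ar → Fml C P ar

/-- Tarskian satisfaction `I,v ⊨ F`. -/
def Fml.sat (cI : C → D) (pI : PredI P ar D) : Fml C P ar → (ℕ → D) → Prop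
  | .atom p t, v => pI p (fun i => (t i).eval cI v)
  | .eq t₁ t₂, v => t₁.eval cI v = t₂.eval cI v
  | .bot, _ => False
  | .and F G, v => F.sat cI pI v ∧ G.sat cI pI v
  | .or F G, v => F.sat cI pI v ∨ G.sat cI pI v
  | .imp F G, v => F.sat cI pI v → G.sat cI pI v
  | .all x F, v => ∀ d : D, F.sat cI pI (Function.update v x d)
  | .ex x F, v => ∃ d : D, F.sat cI pI (Function.update v x d)

/-- Satisfaction of a sentence (truth under every valuation). -/
def Fml.satSent (cI : C → D) (pI : PredI P ar D) (F : Fml C P ar) : Prop :=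
  ∀ v : ℕ → D, F.sat cI pI v

/-- Satisfaction of `F*(u)` (atoms read via `uI`, the `F → G` clause also keeps `F → G`). -/
def Fml.satStar (cI : C → D) (pI uI : PredI P ar D) : Fml C P ar → (ℕ → D) → Prop
  | .atom p t, v => uI p (fun i => (t i).eval cI v)
  | .eq t₁ t₂, v => t₁.eval cI v = t₂.eval cI v
  | .bot, _ => False
  | .and F G, v => F.satStar cI pI uI v ∧ G.satStar cI pI uI v
  | .or F G, v => F.satStar cI pI uI v ∨ G.satStar cI pI uI v
  | .imp F G, v => (F.satStar cI pI uI v → G.satStar cI pI uI v) ∧ (F.sat cI pI v → G.sat cI pI v)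
  | .all x F, v => ∀ d : D, F.satStar cI pI uI (Function.update v x d)
  | .ex x F, v => ∃ d : D, F.satStar cI pI uI (Function.update v x d)

/-- `I ⊨ SM[F]` for a sentence `F`: `F ∧ ¬∃u((u < p) ∧ F*(u))`. -/
def satSM (cI : C → D) (pI : PredI P ar D) (F : Fml C P ar) : Prop :=
  F.satSent cI pI ∧
    ¬ ∃ uI : PredI P ar D, PredI.lt uI pI ∧ ∀ v : ℕ → D, F.satStar cI pI uI v

/-- Satisfaction of `NES_F(u)`. -/
def Fml.satNES (cI : C → D) (pI uI : PredI P ar D) : Fml C P ar → (ℕ → D) → Prop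
  | .atom p t, v => pI p (fun i => (t i).eval cI v) ∧ ¬ uI p (fun i => (t i).eval cI v)
  | .eq t₁ t₂, v => t₁.eval cI v = t₂.eval cI v
  | .bot, _ => False
  | .and F G, v => F.satNES cI pI uI v ∧ G.satNES cI pI uI v
  | .or F G, v => F.satNES cI pI uI v ∨ G.satNES cI pI uI v
  | .imp F G, v => (F.satNES cI pI uI v → G.satNES cI pI uI v) ∧ (F.sat cI pI v → G.sat cI pI v)
  | .all x F, v => ∀ d : D, F.satNES cI pI uI (Function.update v x d)
  | .ex x F, v => ∃ d : D, F.satNES cI pI uI (Function.update v x d)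

def Fml.freeVars : Fml C P ar → Set ℕ
  | .atom _ t => ⋃ i, (t i).vars
  | .eq t₁ t₂ => t₁.vars ∪ t₂.vars
  | .bot => ∅
  | .and F G => F.freeVars ∪ G.freeVars
  | .or F G => F.freeVars ∪ G.freeVars
  | .imp F G => F.freeVars ∪ G.freeVars
  | .all x F => F.freeVars \ {x}
  | .ex x F => F.freeVars \ {x}

/-- The list of quantified (bound) variable occurrences, in order. -/
def Fml.quantVars : Fml C P ar → List ℕ
  | .atom _ _ => []
  | .eq _ _ => []
  | .bot => []
  | .and F G => F.quantVars ++ G.quantVars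
  | .or F G => F.quantVars ++ G.quantVars
  | .imp F G => F.quantVars ++ G.quantVars
  | .all x F => x :: F.quantVars
  | .ex x F => x :: F.quantVars

/-- Rectified form: no variable is both bound and free, and quantifiers
are followed by pairwise distinct variables. -/
def Fml.rectified (F : Fml C P ar) : Prop :=
  F.quantVars.Nodup ∧ ∀ x ∈ F.quantVars, x ∉ F.freeVars

def Fml.preds : Fml C P ar → Set P
  | .atom p _ => {p}
  | .eq _ _ => ∅
  | .bot => ∅
  | .and F G => F.preds ∪ G.preds
  | .or F G => F.preds ∪ G.preds
  | .imp F G => F.preds ∪ G.preds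
  | .all _ F => F.preds
  | .ex _ F => F.preds

def Fml.consts : Fml C P ar → Set C
  | .atom _ t => ⋃ i, (t i).consts
  | .eq t₁ t₂ => t₁.consts ∪ t₂.consts
  | .bot => ∅
  | .and F G => F.consts ∪ G.consts
  | .or F G => F.consts ∪ G.consts
  | .imp F G => F.consts ∪ G.consts
  | .all _ F => F.consts
  | .ex _ F => F.consts

/-- All (non-equality) atoms occurring in a formula. -/
def Fml.atomsOf : Fml C P ar → Set (Atom C P ar)
  | .atom p t => {⟨p, t⟩}
  | .eq _ _ => ∅
  | .bot => ∅
  | .and F G => F.atomsOf ∪ G.atomsOf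
  | .or F G => F.atomsOf ∪ G.atomsOf
  | .imp F G => F.atomsOf ∪ G.atomsOf
  | .all _ F => F.atomsOf
  | .ex _ F => F.atomsOf

def Fml.isNegativeB : Fml C P ar → Bool
  | .atom _ _ => false
  | .eq _ _ => true
  | .bot => true
  | .and F G => F.isNegativeB && G.isNegativeB
  | .or F G => F.isNegativeB && G.isNegativeB
  | .imp _ G => G.isNegativeB
  | .all _ F => F.isNegativeB
  | .ex _ F => F.isNegativeB

/-- A formula is negative if every occurrence of every predicate constant in it
belongs to the antecedent of an implication. -/
def Fml.isNegative (F : Fml C P ar) : Prop := F.isNegativeB = true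

/-- Atoms with a strictly positive occurrence. -/
def Fml.spAtoms : Fml C P ar → Set (Atom C P ar)
  | .atom p t => {⟨p, t⟩}
  | .eq _ _ => ∅
  | .bot => ∅
  | .and F G => F.spAtoms ∪ G.spAtoms
  | .or F G => F.spAtoms ∪ G.spAtoms
  | .imp _ G => G.spAtoms
  | .all _ F => F.spAtoms
  | .ex _ F => F.spAtoms

/-- Implications `G → H` with a strictly positive occurrence. -/
def Fml.spImps : Fml C P ar → Set (Fml C P ar × Fml C P ar)
  | .atom _ _ => ∅
  | .eq _ _ => ∅
  | .bot => ∅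
  | .and F G => F.spImps ∪ G.spImps
  | .or F G => F.spImps ∪ G.spImps
  | .imp F G => insert (F, G) G.spImps
  | .all _ F => F.spImps
  | .ex _ F => F.spImps

/-- Atoms with an occurrence of polarity `b` (`true` = positive) that does not
belong to any occurrence of a negative subformula. -/
def Fml.polNN : Bool → Fml C P ar → Set (Atom C P ar)
  | true, .atom p t => {⟨p, t⟩}
  | false, .atom _ _ => ∅
  | _, .eq _ _ => ∅
  | _, .bot => ∅
  | b, .and F G =>
      if (Fml.and F G).isNegativeB then ∅ else Fml.polNN b F ∪ Fml.polNN b G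
  | b, .or F G =>
      if (Fml.or F G).isNegativeB then ∅ else Fml.polNN b F ∪ Fml.polNN b G
  | b, .imp F G =>
      if (Fml.imp F G).isNegativeB then ∅ else Fml.polNN (!b) F ∪ Fml.polNN b G
  | b, .all x F => if (Fml.all x F).isNegativeB then ∅ else Fml.polNN b F
  | b, .ex x F => if (Fml.ex x F).isNegativeB then ∅ else Fml.polNN b F

/-- `a` depends on `b` in `F`: `a` weakly depends on `b` in an implication that has a
strictly positive occurrence in `F`. -/
def Fml.depends (F : Fml C P ar) (a b : Atom C P ar) : Prop :=
  ∃ GH ∈ F.spImps, a ∈ (Prod.snd GH).spAtoms ∧ b ∈ Fml.polNN true (Prod.fst GH)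

/-- `E_F(v,u)`. -/
def satE (cI : C → D) (F : Fml C P ar) (vI uI : PredI P ar D) : Prop :=
  ∃ a b : Atom C P ar, F.depends a b ∧ ∃ θ : ℕ → D,
    vI a.1 (fun i => (a.2 i).eval cI θ) ∧ uI b.1 (fun i => (b.2 i).eval cI θ) ∧
      ¬ vI b.1 (fun i => (b.2 i).eval cI θ)

/-- `SC_F(u)` : Nonempty(u) ∧ ∀v((v < u) ∧ Nonempty(v) → E_F(v,u)). -/
def satSC (cI : C → D) (F : Fml C P ar) (uI : PredI P ar D) : Prop :=
  PredI.nonemp uI ∧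
    ∀ vI : PredI P ar D, PredI.lt vI uI → PredI.nonemp vI → satE cI F vI uI

/-- `Loop_F(u)` : SC_F(u) ∨ (Nonempty(u) ∧ ∀v((v ≤ u) ∧ SC_F(v) → E_F(v,u))). -/
def satLoopF (cI : C → D) (F : Fml C P ar) (uI : PredI P ar D) : Prop :=
  satSC cI F uI ∨ (PredI.nonemp uI ∧
    ∀ vI : PredI P ar D, PredI.le vI uI → satSC cI F vI → satE cI F vI uI)

/-- Semantic atoms `pᵢ(ξ⃗*)`, where `ξ⃗` is a tuple of universe elements. -/
abbrev SAtom (P : Type) (ar : P → ℕ) (D : Type) := Σ p : P, Fin (ar p) → D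

/-- Edges of the dependency graph of `F` w.r.t. an interpretation. -/
def edgeWrt (cI : C → D) (F : Fml C P ar) (a b : SAtom P ar D) : Prop :=
  ∃ a0 b0 : Atom C P ar, F.depends a0 b0 ∧ ∃ θ : ℕ → D,
    (⟨a0.1, fun i => (a0.2 i).eval cI θ⟩ : SAtom P ar D) = a ∧
    (⟨b0.1, fun i => (b0.2 i).eval cI θ⟩ : SAtom P ar D) = b

/-- The subgraph induced by `Y` is strongly connected. -/
def SCin {V : Type} (E : V → V → Prop) (Y : Set V) : Prop :=
  ∀ a ∈ Y, ∀ b ∈ Y, Relation.ReflTransGen (fun x y => x ∈ Y ∧ y ∈ Y ∧ E x y) a b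

/-- A loop of `F` w.r.t. `I`: nonempty (possibly infinite) set of semantic atoms
inducing a strongly connected subgraph of the dependency graph of `F` w.r.t. `I`. -/
def isLoopWrt (cI : C → D) (F : Fml C P ar) (Y : Set (SAtom P ar D)) : Prop :=
  Y.Nonempty ∧ SCin (edgeWrt cI F) Y

/-- An unbounded set of `F` w.r.t. `I`. -/
def isUnboundedWrt (cI : C → D) (F : Fml C P ar) (Y : Set (SAtom P ar D)) : Prop :=
  Y.Nonempty ∧ ∀ Z ⊆ Y, Z.Nonempty → SCin (edgeWrt cI F) Z →
    ∃ a ∈ Z, ∃ b ∈ Y \ Z, edgeWrt cI F a b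

/-- An extended loop of `F` w.r.t. `I`: a loop or an unbounded set. -/
def isExtLoopWrt (cI : C → D) (F : Fml C P ar) (Y : Set (SAtom P ar D)) : Prop :=
  isLoopWrt cI F Y ∨ isUnboundedWrt cI F Y

/-- Edges of the first-order dependency graph of `F`. -/
def foEdge (F : Fml C P ar) (a b : Atom C P ar) : Prop :=
  ∃ a0 b0 : Atom C P ar, F.depends a0 b0 ∧ ∃ θ : ℕ → Term C,
    a0.subst θ = a ∧ b0.subst θ = b

/-- A first-order loop of `F`. -/
def isFOLoop (F : Fml C P ar) (Y : Set (Atom C P ar)) : Prop :=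
  Y.Finite ∧ Y.Nonempty ∧ SCin (foEdge F) Y

/-- Normal form: no object constants occur in strictly positive occurrences of atoms. -/
def Fml.normalForm (F : Fml C P ar) : Prop :=
  ∀ a ∈ F.spAtoms, ∀ i, (a.2 i).isVar

/-- `Y₁` subsumes `Y₂`. -/
def subsumes (Y₁ Y₂ : Set (Atom C P ar)) : Prop :=
  ∃ θ : ℕ → Term C, Atom.subst θ '' Y₁ = Y₂

/-- Satisfaction of `NFES_F(Y)`; the terms of the atoms in `Y` are evaluated under the
outer valuation `w` (implementing the renaming of the bound variables of `F` apart
from `Y`), the terms of `F` under the current valuation `v`. -/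
def Fml.satNFES (cI : C → D) (pI : PredI P ar D) (Y : Set (Atom C P ar)) (w : ℕ → D) :
    Fml C P ar → (ℕ → D) → Prop
  | .atom p t, v => pI p (fun i => (t i).eval cI v) ∧
      ∀ t' : Fin (ar p) → Term C, (⟨p, t'⟩ : Atom C P ar) ∈ Y →
        ¬ ∀ i, (t i).eval cI v = (t' i).eval cI w
  | .eq t₁ t₂, v => t₁.eval cI v = t₂.eval cI v
  | .bot, _ => False
  | .and F G, v => F.satNFES cI pI Y w v ∧ G.satNFES cI pI Y w v
  | .or F G, v => F.satNFES cI pI Y w v ∨ G.satNFES cI pI Y w v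
  | .imp F G, v =>
      (F.satNFES cI pI Y w v → G.satNFES cI pI Y w v) ∧ (F.sat cI pI v → G.sat cI pI v)
  | .all x F, v => ∀ d : D, F.satNFES cI pI Y w (Function.update v x d)
  | .ex x F, v => ∃ d : D, F.satNFES cI pI Y w (Function.update v x d)

/-- Truth of an atom of `Y` under valuation `w`. -/
def Atom.holds (cI : C → D) (pI : PredI P ar D) (w : ℕ → D) (a : Atom C P ar) : Prop :=
  pI a.1 (fun i => (a.2 i).eval cI w)

/-- `I ⊨ FLF_F(Y)` : the universal closure (over the variables of `Y`) of
`⋀Y → ¬NFES_F(Y)`. -/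
def satFLF (cI : C → D) (pI : PredI P ar D) (F : Fml C P ar) (Y : Set (Atom C P ar)) : Prop :=
  ∀ w : ℕ → D, (∀ a ∈ Y, a.holds cI pI w) → ¬ F.satNFES cI pI Y w w

/-- Restricted variables `RV(F)`. -/
def Fml.RV : Fml C P ar → Set ℕ
  | .atom _ t => ⋃ i, (t i).vars
  | .eq (.var _) (.var _) => ∅
  | .eq t₁ t₂ => t₁.vars ∪ t₂.vars
  | .bot => ∅
  | .and F G => F.RV ∪ G.RV
  | .or F G => F.RV ∩ G.RV
  | .imp _ _ => ∅
  | .all x F => F.RV \ {x}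
  | .ex x F => F.RV \ {x}

/-- The unsafe variables of `F`: variables with an occurrence not in `∀x`, `∃x`, nor in
any subformula `G → H` with `x ∈ RV(G)`. -/
def Fml.unsafeVars : Fml C P ar → Set ℕ
  | .atom _ t => ⋃ i, (t i).vars
  | .eq t₁ t₂ => t₁.vars ∪ t₂.vars
  | .bot => ∅
  | .and F G => F.unsafeVars ∪ G.unsafeVars
  | .or F G => F.unsafeVars ∪ G.unsafeVars
  | .imp F G => (F.unsafeVars ∪ G.unsafeVars) \ F.RV
  | .all _ F => F.unsafeVars
  | .ex _ F => F.unsafeVars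

/-- `I ⊨ U_F`. -/
def satU (cI : C → D) (pI : PredI P ar D) (F : Fml C P ar) : Prop :=
  ∀ p : P, ∀ xs : Fin (ar p) → D, pI p xs → ∀ i, ∃ c ∈ F.consts, xs i = cI c

/-! ### Logic programs -/

def Term.varList : Term C → List ℕ
  | .var x => [x]
  | .const _ => []

def Fml.freeList : Fml C P ar → List ℕ
  | .atom p t => (List.finRange (ar p)).foldr (fun i l => (t i).varList ++ l) []
  | .eq t₁ t₂ => t₁.varList ++ t₂.varList
  | .bot => []
  | .and F G => F.freeList ++ G.freeList
  | .or F G => F.freeList ++ G.freeList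
  | .imp F G => F.freeList ++ G.freeList
  | .all x F => F.freeList.filter (· ≠ x)
  | .ex x F => F.freeList.filter (· ≠ x)

/-- Universal closure. -/
def Fml.closure (F : Fml C P ar) : Fml C P ar := F.freeList.foldr Fml.all F

def Fml.top : Fml C P ar := Fml.imp Fml.bot Fml.bot

def Atom.toFml (a : Atom C P ar) : Fml C P ar := Fml.atom a.1 a.2

/-- A nondisjunctive rule `A ← B, N` (`N` is required to be a negative formula
in the statements below). -/
structure NRule (C P : Type) (ar : P → ℕ) where
  head : Atom C P ar
  body : List (Atom C P ar)
  neg : Fml C P ar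

/-- A nondisjunctive program. -/
abbrev NProg (C P : Type) (ar : P → ℕ) := List (NRule C P ar)

def NRule.toFml (r : NRule C P ar) : Fml C P ar :=
  Fml.imp (r.body.foldr (fun a G => (Atom.toFml a).and G) r.neg) (Atom.toFml r.head)

/-- FOL-representation of a nondisjunctive program. -/
def NProg.toFml (Pr : NProg C P ar) : Fml C P ar :=
  Pr.foldr (fun r G => (Fml.closure (NRule.toFml r)).and G) Fml.top

/-- Terms occurring in `Y`. -/
def termsOf (Y : Set (Atom C P ar)) : Set (Term C) := {t | ∃ a ∈ Y, ∃ i, a.2 i = t}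

def NRule.headVars (r : NRule C P ar) : Set ℕ := Atom.vars r.head

/-- One disjunct of `FES_Π(Y)`, evaluated under the valuation `w` of the
variables of `Y` (the variables of the rule are implicitly renamed apart from `Y`:
they are interpreted by the existential valuation `s`, while terms of `Y` and the
`θ`-images of head variables are evaluated under `w`). -/
def NRule.FES (cI : C → D) (pI : PredI P ar D) (r : NRule C P ar)
    (Y : Set (Atom C P ar)) (w : ℕ → D) : Prop :=
  ∃ θ : ℕ → Option (Term C),
    (∀ x ∈ NRule.headVars r, ∃ t ∈ termsOf Y, θ x = some t) ∧
    (∀ x, x ∉ NRule.headVars r → θ x = none) ∧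
    Atom.subst (fun x => (θ x).getD (Term.var x)) r.head ∈ Y ∧
    ∃ s : ℕ → D,
      let v : ℕ → D := fun x => match θ x with
        | some t => t.eval cI w
        | none => s x
      (∀ b ∈ r.body, pI b.1 (fun i => (b.2 i).eval cI v)) ∧
      (NRule.neg r).sat cI pI v ∧
      (∀ b ∈ r.body, ∀ t' : Fin (ar b.1) → Term C, (⟨b.1, t'⟩ : Atom C P ar) ∈ Y →
        ¬ ∀ i, (b.2 i).eval cI v = (t' i).eval cI w)

/-- `FES_Π(Y)` under valuation `w`. -/
def NProg.FES (cI : C → D) (pI : PredI P ar D) (Pr : NProg C P ar)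
    (Y : Set (Atom C P ar)) (w : ℕ → D) : Prop :=
  ∃ r ∈ Pr, NRule.FES cI pI r Y w

/-- `I ⊨ FLF_Π(Y)`. -/
def NProg.satFLF (cI : C → D) (pI : PredI P ar D) (Pr : NProg C P ar)
    (Y : Set (Atom C P ar)) : Prop :=
  ∀ w : ℕ → D, (∀ a ∈ Y, Atom.holds cI pI w a) → NProg.FES cI pI Pr Y w

/-- `p(t)` depends on `q(t')` in the program `Pr`. -/
def NProg.depends (Pr : NProg C P ar) (a b : Atom C P ar) : Prop :=
  ∃ r ∈ Pr, NRule.head r = a ∧ b ∈ NRule.body r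

/-- Edges of the first-order dependency graph of a nondisjunctive program. -/
def NProg.foEdge (Pr : NProg C P ar) (a b : Atom C P ar) : Prop :=
  ∃ a0 b0 : Atom C P ar, NProg.depends Pr a0 b0 ∧ ∃ θ : ℕ → Term C,
    a0.subst θ = a ∧ b0.subst θ = b

/-- First-order loops of a nondisjunctive program. -/
def NProg.isFOLoop (Pr : NProg C P ar) (Y : Set (Atom C P ar)) : Prop :=
  Y.Finite ∧ Y.Nonempty ∧ SCin (NProg.foEdge Pr) Y

/-! ### Grounding (Herbrand universe `C`, constants denote themselves) -/

/-- Ground atoms of `σ(Π)^g`. -/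
abbrev GAtom (C P : Type) (ar : P → ℕ) := Σ p : P, Fin (ar p) → C

/-- The ground instance of an atom under an assignment of constants to variables. -/
def Atom.ground (v : ℕ → C) (a : Atom C P ar) : GAtom C P ar :=
  ⟨a.1, fun i => (a.2 i).eval id v⟩

/-- `I ⊨ LF_{Ground(Π)}(Y)` for a set `Y` of ground atoms and an Herbrand
interpretation given by `pI`. -/
def NProg.satLFg (pI : PredI P ar C) (Pr : NProg C P ar) (Y : Set (GAtom C P ar)) : Prop :=
  (∀ a ∈ Y, pI a.1 a.2) → ∃ r ∈ Pr, ∃ v : ℕ → C,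
    Atom.ground v (NRule.head r) ∈ Y ∧
    (∀ b ∈ NRule.body r, Atom.ground v b ∉ Y) ∧
    (∀ b ∈ NRule.body r, pI b.1 (fun i => (b.2 i).eval id v)) ∧
    (NRule.neg r).sat id pI v

/-- Edges of the dependency graph of `Ground(Π)`. -/
def NProg.gEdge (Pr : NProg C P ar) (a b : GAtom C P ar) : Prop :=
  ∃ r ∈ Pr, ∃ v : ℕ → C,
    Atom.ground v (NRule.head r) = a ∧ ∃ b0 ∈ NRule.body r, Atom.ground v b0 = b

/-- Loops of `Ground(Π)`. -/
def NProg.gLoop (Pr : NProg C P ar) (Y : Set (GAtom C P ar)) : Prop :=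
  Y.Nonempty ∧ SCin (NProg.gEdge Pr) Y

/-- A ground atom occurs in `Ground(Π)`. -/
def NProg.occursInGround (Pr : NProg C P ar) (a : GAtom C P ar) : Prop :=
  ∃ r ∈ Pr, ∃ v : ℕ → C,
    Atom.ground v (NRule.head r) = a ∨ (∃ b ∈ NRule.body r, Atom.ground v b = a) ∨
      ∃ a0 ∈ (NRule.neg r).atomsOf, Atom.ground v a0 = a

/-! ### Disjunctive programs -/

/-- A disjunctive rule `A ← B, N`. -/
structure DRule (C P : Type) (ar : P → ℕ) where
  head : List (Atom C P ar)
  body : List (Atom C P ar)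
  neg : Fml C P ar

abbrev DProg (C P : Type) (ar : P → ℕ) := List (DRule C P ar)

def DRule.toFml (r : DRule C P ar) : Fml C P ar :=
  Fml.imp (r.body.foldr (fun a G => (Atom.toFml a).and G) r.neg)
    (r.head.foldr (fun a G => (Atom.toFml a).or G) Fml.bot)

def DProg.toFml (Pr : DProg C P ar) : Fml C P ar :=
  Pr.foldr (fun r G => (Fml.closure (DRule.toFml r)).and G) Fml.top

def DRule.headVars (r : DRule C P ar) : Set ℕ :=
  {x | ∃ a ∈ r.head, ∃ i, a.2 i = Term.var x}

/-- One disjunct of the disjunctive `FES_Π(Y)` under valuation `w`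
(`θ x = none` means `θ` maps `x` to itself). -/
def DRule.FES (cI : C → D) (pI : PredI P ar D) (r : DRule C P ar)
    (Y : Set (Atom C P ar)) (w : ℕ → D) : Prop :=
  ∃ θ : ℕ → Option (Term C),
    (∀ x t, θ x = some t → x ∈ DRule.headVars r ∧ t ∈ termsOf Y) ∧
    (∃ a ∈ r.head, Atom.subst (fun x => (θ x).getD (Term.var x)) a ∈ Y) ∧
    ∃ s : ℕ → D,
      let v : ℕ → D := fun x => match θ x with
        | some t => t.eval cI w
        | none => s x
      (∀ b ∈ r.body, pI b.1 (fun i => (b.2 i).eval cI v)) ∧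
      (DRule.neg r).sat cI pI v ∧
      (∀ b ∈ r.body, ∀ t' : Fin (ar b.1) → Term C, (⟨b.1, t'⟩ : Atom C P ar) ∈ Y →
        ¬ ∀ i, (b.2 i).eval cI v = (t' i).eval cI w) ∧
      ¬ ∃ a ∈ r.head, pI a.1 (fun i => (a.2 i).eval cI v) ∧
          ∀ t' : Fin (ar a.1) → Term C, (⟨a.1, t'⟩ : Atom C P ar) ∈ Y →
            ¬ ∀ i, (a.2 i).eval cI v = (t' i).eval cI w

def DProg.FES (cI : C → D) (pI : PredI P ar D) (Pr : DProg C P ar)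
    (Y : Set (Atom C P ar)) (w : ℕ → D) : Prop :=
  ∃ r ∈ Pr, DRule.FES cI pI r Y w

/-! ### Extended programs -/

/-- Every occurrence of an implication belongs to (an occurrence of) a negative formula. -/
def Fml.impsProtected : Fml C P ar → Prop
  | .atom _ _ => True
  | .eq _ _ => True
  | .bot => True
  | .and F G => (Fml.and F G).isNegative ∨ (F.impsProtected ∧ G.impsProtected)
  | .or F G => (Fml.or F G).isNegative ∨ (F.impsProtected ∧ G.impsProtected)
  | .imp F G => (Fml.imp F G).isNegative
  | .all x F => (Fml.all x F).isNegative ∨ F.impsProtected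
  | .ex x F => (Fml.ex x F).isNegative ∨ F.impsProtected

/-- An extended rule `H ← G`. -/
structure ERule (C P : Type) (ar : P → ℕ) where
  head : Fml C P ar
  body : Fml C P ar

abbrev EProg (C P : Type) (ar : P → ℕ) := List (ERule C P ar)

def ERule.toFml (r : ERule C P ar) : Fml C P ar := Fml.imp r.body r.head

def EProg.toFml (Pr : EProg C P ar) : Fml C P ar :=
  Pr.foldr (fun r G => (Fml.closure (ERule.toFml r)).and G) Fml.top

/-- One disjunct of `EFES_Π(Y)` under valuation `w`: the rule head contains a strictly
positive occurrence of a predicate constant occurring in an atom of `Y`, and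
`∃z(NFES_G(Y) ∧ ¬NFES_H(Y))`. -/
def ERule.EFES (cI : C → D) (pI : PredI P ar D) (r : ERule C P ar)
    (Y : Set (Atom C P ar)) (w : ℕ → D) : Prop :=
  (∃ p : P, (∃ t, (⟨p, t⟩ : Atom C P ar) ∈ (ERule.head r).spAtoms) ∧
      ∃ t', (⟨p, t'⟩ : Atom C P ar) ∈ Y) ∧
  ∃ s : ℕ → D, (ERule.body r).satNFES cI pI Y w s ∧ ¬ (ERule.head r).satNFES cI pI Y w s

def EProg.EFES (cI : C → D) (pI : PredI P ar D) (Pr : EProg C P ar)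
    (Y : Set (Atom C P ar)) (w : ℕ → D) : Prop :=
  ∃ r ∈ Pr, ERule.EFES cI pI r Y w

/-- A disjunctive rule viewed as an extended rule. -/
def DRule.toERule (r : DRule C P ar) : ERule C P ar :=
  ⟨r.head.foldr (fun a G => (Atom.toFml a).or G) Fml.bot,
   r.body.foldr (fun a G => (Atom.toFml a).and G) r.neg⟩


/-! `NES_F(u)` is `F*(p ∖ u)`, and on relations below `p` the map `u ↦ p ∖ u` is an involution
taking the nonempty `u` exactly to the `w` with `w < p`. So a nonempty `u ≤ p` satisfying
`NES_F(u)` is the same thing as a `w < p` satisfying `F*(w)`. -/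

def PredI.sdiff (pI uI : PredI P ar D) : PredI P ar D := fun p xs => pI p xs ∧ ¬ uI p xs

lemma PredI.sdiff_le (pI uI : PredI P ar D) : (pI.sdiff uI).le pI :=
  fun _ _ h => h.1

lemma PredI.sdiff_sdiff_of_le {pI uI : PredI P ar D} (h : uI.le pI) :
    pI.sdiff (pI.sdiff uI) = uI := by
  funext p xs
  exact propext ⟨fun ⟨hp, hn⟩ => not_not.1 fun hu => hn ⟨hp, hu⟩,
    fun hu => ⟨h p xs hu, fun hs => hs.2 hu⟩⟩

lemma PredI.sdiff_lt_iff_nonemp {pI uI : PredI P ar D} (h : uI.le pI) :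
    (pI.sdiff uI).lt pI ↔ uI.nonemp := by
  refine ⟨fun ⟨_, hne⟩ => ?_, fun ⟨p, xs, hu⟩ => ⟨pI.sdiff_le uI, fun heqv => ?_⟩⟩
  · by_contra hemp
    exact hne fun p xs => ⟨fun hs => hs.1, fun hp => ⟨hp, fun hu => hemp ⟨p, xs, hu⟩⟩⟩
  · exact ((heqv p xs).2 (h p xs hu)).2 hu

lemma Fml.satNES_iff_satStar_sdiff (cI : C → D) (pI uI : PredI P ar D) (F : Fml C P ar)
    (v : ℕ → D) : F.satNES cI pI uI v ↔ F.satStar cI pI (pI.sdiff uI) v := by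
  induction F generalizing v <;>
    simp_all only [Fml.satNES, Fml.satStar, PredI.sdiff]

theorem statement_0_general {C P D : Type} {ar : P → ℕ}
    (cI : C → D) (pI : PredI P ar D) (F : Fml C P ar) :
    satSM cI pI F ↔
      (F.satSent cI pI ∧
        ∀ uI : PredI P ar D, PredI.le uI pI → PredI.nonemp uI →
          ¬ ∀ v : ℕ → D, F.satNES cI pI uI v) := by
  simp only [satSM, Fml.satNES_iff_satStar_sdiff]
  refine and_congr_right fun _ => ⟨?_, ?_⟩
  · rintro hmin uI hle hne hstar
    exact hmin ⟨pI.sdiff uI, (PredI.sdiff_lt_iff_nonemp hle).2 hne, hstar⟩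
  · rintro hmax ⟨wI, hlt, hstar⟩
    have hinv := PredI.sdiff_sdiff_of_le hlt.1
    refine hmax _ (pI.sdiff_le wI) ((PredI.sdiff_lt_iff_nonemp (pI.sdiff_le wI)).1 ?_) ?_
    · rwa [hinv]
    · rwa [hinv]

/-- Proposition 2: for any sentence `F`, `SM[F]` is equivalent to
`F ∧ ∀u((u ≤ p) ∧ Nonempty(u) → ¬NES_F(u))`. -/
theorem statement_0 {C P D : Type} {ar : P → ℕ} [Nonempty D]
    (cI : C → D) (pI : PredI P ar D) (F : Fml C P ar)
    (hsent : F.freeVars = ∅) (hpreds : ∀ p : P, p ∈ F.preds) :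
    satSM cI pI F ↔
      (F.satSent cI pI ∧
        ∀ uI : PredI P ar D, PredI.le uI pI → PredI.nonemp uI →
          ¬ ∀ v : ℕ → D, F.satNES cI pI uI v) :=
  statement_0_general cI pI F

end SMLF
end

section
/- For any first-order sentence F in rectified form whose predicate constants are p = p1,…,pn and any interpretation I of its signature, I satisfies SM[F] if and only if I satisfies the second-order sentence F ∧ ∀u((u ≤ p) ∧ Loop_F(u) → ¬NES_F(u)), where the second-order quantifier ∀u ranges over all tuples u = u1,…,un of relations on the universe of I of the same arities as p. -/
set_option linter.unusedVariables false

namespace SMLF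

variable {C P D : Type} {ar : P → ℕ}

/-! ### Auxiliary lemmas for Statement 1 -/

private lemma evalCongr (cI : C → D) {θ θ' : ℕ → D} (a : Atom C P ar)
    (h : ∀ x ∈ Atom.vars a, θ x = θ' x) :
    (fun i => (a.2 i).eval cI θ) = (fun i => (a.2 i).eval cI θ') := by
  funext i
  cases hti : a.2 i with
  | var x => simp only [Term.eval]; exact h x ⟨i, hti⟩
  | const c => simp only [Term.eval]

lemma nes_sat (cI : C → D) (pI uI : PredI P ar D) :
    ∀ (G : Fml C P ar) (v : ℕ → D), Fml.satNES cI pI uI G v → Fml.sat cI pI G v := by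
  intro G
  induction G with
  | atom p t => intro v h; exact h.1
  | eq t₁ t₂ => intro v h; exact h
  | bot => intro v h; exact h
  | and A B ihA ihB => intro v h; exact ⟨ihA v h.1, ihB v h.2⟩
  | or A B ihA ihB =>
      intro v h
      rcases h with h | h
      · exact Or.inl (ihA v h)
      · exact Or.inr (ihB v h)
  | imp A B ihA ihB => intro v h; exact h.2
  | all x A ih => intro v h d; exact ih _ (h d)
  | ex x A ih =>
      intro v h
      obtain ⟨d, hd⟩ := h
      exact ⟨d, ih _ hd⟩

lemma neg_sat_nes (cI : C → D) (pI uI : PredI P ar D) :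
    ∀ (G : Fml C P ar), G.isNegativeB = true →
      ∀ v : ℕ → D, Fml.sat cI pI G v → Fml.satNES cI pI uI G v := by
  intro G
  induction G with
  | atom p t => intro h; simp [Fml.isNegativeB] at h
  | eq t₁ t₂ => intro _ v h; exact h
  | bot => intro _ v h; exact h
  | and A B ihA ihB =>
      intro hneg v h
      simp only [Fml.isNegativeB, Bool.and_eq_true] at hneg
      exact ⟨ihA hneg.1 v h.1, ihB hneg.2 v h.2⟩
  | or A B ihA ihB =>
      intro hneg v h
      simp only [Fml.isNegativeB, Bool.and_eq_true] at hneg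
      rcases h with h | h
      · exact Or.inl (ihA hneg.1 v h)
      · exact Or.inr (ihB hneg.2 v h)
  | imp A B ihA ihB =>
      intro hneg v h
      have hnB : B.isNegativeB = true := hneg
      exact ⟨fun hA => ihB hnB v (h (nes_sat cI pI uI A v hA)), h⟩
  | all x A ih =>
      intro hneg v h d
      exact ih hneg _ (h d)
  | ex x A ih =>
      intro hneg v h
      obtain ⟨d, hd⟩ := h
      exact ⟨d, ih hneg _ hd⟩

lemma nes_iff_star (cI : C → D) (pI uI : PredI P ar D) :
    ∀ (G : Fml C P ar) (v : ℕ → D),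
      Fml.satNES cI pI uI G v ↔
        Fml.satStar cI pI (fun p xs => pI p xs ∧ ¬ uI p xs) G v := by
  intro G
  induction G with
  | atom p t => intro v; exact Iff.rfl
  | eq t₁ t₂ => intro v; exact Iff.rfl
  | bot => intro v; exact Iff.rfl
  | and A B ihA ihB => intro v; exact and_congr (ihA v) (ihB v)
  | or A B ihA ihB => intro v; exact or_congr (ihA v) (ihB v)
  | imp A B ihA ihB =>
      intro v
      exact and_congr (imp_congr (ihA v) (ihB v)) Iff.rfl
  | all x A ih => intro v; exact forall_congr' fun d => ih _
  | ex x A ih => intro v; exact exists_congr fun d => ih _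

lemma spAtoms_vars :
    ∀ (G : Fml C P ar), ∀ a ∈ G.spAtoms, ∀ x ∈ Atom.vars a,
      x ∈ G.freeVars ∨ x ∈ G.quantVars := by
  intro G
  induction G with
  | atom p t =>
      intro a ha x hx
      left
      rcases ha with rfl
      obtain ⟨i, hi⟩ := hx
      simp only [Fml.freeVars, Set.mem_iUnion]
      exact ⟨i, by rw [show t i = Term.var x from hi]; rfl⟩
  | eq t₁ t₂ => intro a ha; exact absurd ha (Set.notMem_empty a)
  | bot => intro a ha; exact absurd ha (Set.notMem_empty a)
  | and A B ihA ihB =>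
      intro a ha x hx
      rcases ha with ha | ha
      · rcases ihA a ha x hx with h | h
        · exact Or.inl (Or.inl h)
        · exact Or.inr (List.mem_append_left _ h)
      · rcases ihB a ha x hx with h | h
        · exact Or.inl (Or.inr h)
        · exact Or.inr (List.mem_append_right _ h)
  | or A B ihA ihB =>
      intro a ha x hx
      rcases ha with ha | ha
      · rcases ihA a ha x hx with h | h
        · exact Or.inl (Or.inl h)
        · exact Or.inr (List.mem_append_left _ h)
      · rcases ihB a ha x hx with h | h
        · exact Or.inl (Or.inr h)
        · exact Or.inr (List.mem_append_right _ h)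
  | imp A B ihA ihB =>
      intro a ha x hx
      rcases ihB a ha x hx with h | h
      · exact Or.inl (Or.inr h)
      · exact Or.inr (List.mem_append_right _ h)
  | all y A ih =>
      intro a ha x hx
      rcases ih a ha x hx with h | h
      · by_cases hxy : x = y
        · exact Or.inr (by simp [Fml.quantVars, hxy])
        · exact Or.inl ⟨h, hxy⟩
      · exact Or.inr (List.mem_cons_of_mem _ h)
  | ex y A ih =>
      intro a ha x hx
      rcases ih a ha x hx with h | h
      · by_cases hxy : x = y
        · exact Or.inr (by simp [Fml.quantVars, hxy])
        · exact Or.inl ⟨h, hxy⟩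
      · exact Or.inr (List.mem_cons_of_mem _ h)

lemma polNN_vars :
    ∀ (G : Fml C P ar) (b : Bool), ∀ a ∈ Fml.polNN b G, ∀ x ∈ Atom.vars a,
      x ∈ G.freeVars ∨ x ∈ G.quantVars := by
  intro G
  induction G with
  | atom p t =>
      intro b a ha x hx
      cases b with
      | false => exact absurd ha (Set.notMem_empty a)
      | true =>
          left
          rcases ha with rfl
          obtain ⟨i, hi⟩ := hx
          simp only [Fml.freeVars, Set.mem_iUnion]
          exact ⟨i, by rw [show t i = Term.var x from hi]; rfl⟩
  | eq t₁ t₂ =>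
      intro b a ha
      cases b <;> exact absurd ha (Set.notMem_empty a)
  | bot =>
      intro b a ha
      cases b <;> exact absurd ha (Set.notMem_empty a)
  | and A B ihA ihB =>
      intro b a ha x hx
      simp only [Fml.polNN] at ha
      split_ifs at ha with hneg
      · exact absurd ha (Set.notMem_empty a)
      · rcases ha with ha | ha
        · rcases ihA b a ha x hx with h | h
          · exact Or.inl (Or.inl h)
          · exact Or.inr (List.mem_append_left _ h)
        · rcases ihB b a ha x hx with h | h
          · exact Or.inl (Or.inr h)
          · exact Or.inr (List.mem_append_right _ h)
  | or A B ihA ihB =>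
      intro b a ha x hx
      simp only [Fml.polNN] at ha
      split_ifs at ha with hneg
      · exact absurd ha (Set.notMem_empty a)
      · rcases ha with ha | ha
        · rcases ihA b a ha x hx with h | h
          · exact Or.inl (Or.inl h)
          · exact Or.inr (List.mem_append_left _ h)
        · rcases ihB b a ha x hx with h | h
          · exact Or.inl (Or.inr h)
          · exact Or.inr (List.mem_append_right _ h)
  | imp A B ihA ihB =>
      intro b a ha x hx
      simp only [Fml.polNN] at ha
      split_ifs at ha with hneg
      · exact absurd ha (Set.notMem_empty a)
      · rcases ha with ha | ha
        · rcases ihA (!b) a ha x hx with h | h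
          · exact Or.inl (Or.inl h)
          · exact Or.inr (List.mem_append_left _ h)
        · rcases ihB b a ha x hx with h | h
          · exact Or.inl (Or.inr h)
          · exact Or.inr (List.mem_append_right _ h)
  | all y A ih =>
      intro b a ha x hx
      simp only [Fml.polNN] at ha
      split_ifs at ha with hneg
      · exact absurd ha (Set.notMem_empty a)
      · rcases ih b a ha x hx with h | h
        · by_cases hxy : x = y
          · exact Or.inr (by simp [Fml.quantVars, hxy])
          · exact Or.inl ⟨h, hxy⟩
        · exact Or.inr (List.mem_cons_of_mem _ h)
  | ex y A ih =>
      intro b a ha x hx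
      simp only [Fml.polNN] at ha
      split_ifs at ha with hneg
      · exact absurd ha (Set.notMem_empty a)
      · rcases ih b a ha x hx with h | h
        · by_cases hxy : x = y
          · exact Or.inr (by simp [Fml.quantVars, hxy])
          · exact Or.inl ⟨h, hxy⟩
        · exact Or.inr (List.mem_cons_of_mem _ h)

/-- If `B` is true and no strictly positive atom of `B` is in `v` (under
extensions of the base valuation inside `X`), then `NES_B(v)` holds. -/
lemma satP (cI : C → D) (pI vI : PredI P ar D) (X : Set ℕ) (w0 : ℕ → D) :
    ∀ (G : Fml C P ar), (∀ x ∈ G.quantVars, x ∈ X) →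
    (∀ a ∈ G.spAtoms, ∀ θ : ℕ → D, (∀ x, x ∉ X → θ x = w0 x) →
       ¬ vI a.1 (fun i => (a.2 i).eval cI θ)) →
    ∀ w : ℕ → D, (∀ x, x ∉ X → w x = w0 x) →
    Fml.sat cI pI G w → Fml.satNES cI pI vI G w := by
  intro G
  induction G with
  | atom p t =>
      intro hqv hblk w hw hsat
      exact ⟨hsat, hblk ⟨p, t⟩ rfl w hw⟩
  | eq t₁ t₂ => intro _ _ w _ h; exact h
  | bot => intro _ _ w _ h; exact h
  | and A B ihA ihB =>
      intro hqv hblk w hw hsat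
      refine ⟨ihA ?_ ?_ w hw hsat.1, ihB ?_ ?_ w hw hsat.2⟩
      · exact fun x hx => hqv x (List.mem_append_left _ hx)
      · exact fun a ha => hblk a (Or.inl ha)
      · exact fun x hx => hqv x (List.mem_append_right _ hx)
      · exact fun a ha => hblk a (Or.inr ha)
  | or A B ihA ihB =>
      intro hqv hblk w hw hsat
      rcases hsat with h | h
      · exact Or.inl (ihA (fun x hx => hqv x (List.mem_append_left _ hx))
          (fun a ha => hblk a (Or.inl ha)) w hw h)
      · exact Or.inr (ihB (fun x hx => hqv x (List.mem_append_right _ hx))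
          (fun a ha => hblk a (Or.inr ha)) w hw h)
  | imp A B ihA ihB =>
      intro hqv hblk w hw hsat
      refine ⟨?_, hsat⟩
      intro hA
      exact ihB (fun x hx => hqv x (List.mem_append_right _ hx)) hblk w hw
        (hsat (nes_sat cI pI vI A w hA))
  | all x A ih =>
      intro hqv hblk w hw hsat d
      have hx : x ∈ X := hqv x (List.mem_cons_self)
      refine ih (fun y hy => hqv y (List.mem_cons_of_mem _ hy)) hblk _ ?_ (hsat d)
      intro y hy
      rw [Function.update_of_ne (fun h => hy (by rw [h]; exact hx))]
      exact hw y hy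
  | ex x A ih =>
      intro hqv hblk w hw hsat
      obtain ⟨d, hd⟩ := hsat
      have hx : x ∈ X := hqv x (List.mem_cons_self)
      refine ⟨d, ih (fun y hy => hqv y (List.mem_cons_of_mem _ hy)) hblk _ ?_ hd⟩
      intro y hy
      rw [Function.update_of_ne (fun h => hy (by rw [h]; exact hx))]
      exact hw y hy

/-- Main monotonicity lemma: if all atoms of the relevant polarity are blocked
(never in `u − v`), then `NES(v) → NES(u)` (for `b = true`) and
`NES(u) → NES(v)` (for `b = false`). -/
lemma rev_main (cI : C → D) (pI uI vI : PredI P ar D)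
    (hle : ∀ p xs, vI p xs → uI p xs) (X : Set ℕ) (w0 : ℕ → D) :
    ∀ (G : Fml C P ar) (b : Bool), (∀ x ∈ G.quantVars, x ∈ X) →
    (∀ a ∈ Fml.polNN b G, ∀ θ : ℕ → D, (∀ x, x ∉ X → θ x = w0 x) →
       ¬ (uI a.1 (fun i => (a.2 i).eval cI θ) ∧ ¬ vI a.1 (fun i => (a.2 i).eval cI θ))) →
    ∀ w : ℕ → D, (∀ x, x ∉ X → w x = w0 x) →
    (b = true → (Fml.satNES cI pI vI G w → Fml.satNES cI pI uI G w)) ∧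
    (b = false → (Fml.satNES cI pI uI G w → Fml.satNES cI pI vI G w)) := by
  intro G
  induction G with
  | atom p t =>
      intro b hqv hblk w hw
      constructor
      · rintro rfl h
        refine ⟨h.1, fun hu => hblk ⟨p, t⟩ rfl w hw ⟨hu, h.2⟩⟩
      · rintro rfl h
        exact ⟨h.1, fun hv => h.2 (hle _ _ hv)⟩
  | eq t₁ t₂ => intro b _ _ w _; exact ⟨fun _ h => h, fun _ h => h⟩
  | bot => intro b _ _ w _; exact ⟨fun _ h => h, fun _ h => h⟩
  | and A B ihA ihB =>
      intro b hqv hblk w hw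
      by_cases hneg : (Fml.and A B).isNegativeB = true
      · constructor
        · rintro rfl h
          exact neg_sat_nes cI pI uI _ hneg w (nes_sat cI pI vI _ w h)
        · rintro rfl h
          exact neg_sat_nes cI pI vI _ hneg w (nes_sat cI pI uI _ w h)
      · simp only [Fml.polNN, if_neg hneg] at hblk
        have hA := ihA b (fun x hx => hqv x (List.mem_append_left _ hx))
          (fun a ha => hblk a (Or.inl ha)) w hw
        have hB := ihB b (fun x hx => hqv x (List.mem_append_right _ hx))
          (fun a ha => hblk a (Or.inr ha)) w hw
        constructor
        · rintro rfl h; exact ⟨hA.1 rfl h.1, hB.1 rfl h.2⟩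
        · rintro rfl h; exact ⟨hA.2 rfl h.1, hB.2 rfl h.2⟩
  | or A B ihA ihB =>
      intro b hqv hblk w hw
      by_cases hneg : (Fml.or A B).isNegativeB = true
      · constructor
        · rintro rfl h
          exact neg_sat_nes cI pI uI _ hneg w (nes_sat cI pI vI _ w h)
        · rintro rfl h
          exact neg_sat_nes cI pI vI _ hneg w (nes_sat cI pI uI _ w h)
      · simp only [Fml.polNN, if_neg hneg] at hblk
        have hA := ihA b (fun x hx => hqv x (List.mem_append_left _ hx))
          (fun a ha => hblk a (Or.inl ha)) w hw
        have hB := ihB b (fun x hx => hqv x (List.mem_append_right _ hx))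
          (fun a ha => hblk a (Or.inr ha)) w hw
        constructor
        · rintro rfl h
          rcases h with h | h
          · exact Or.inl (hA.1 rfl h)
          · exact Or.inr (hB.1 rfl h)
        · rintro rfl h
          rcases h with h | h
          · exact Or.inl (hA.2 rfl h)
          · exact Or.inr (hB.2 rfl h)
  | imp A B ihA ihB =>
      intro b hqv hblk w hw
      by_cases hneg : (Fml.imp A B).isNegativeB = true
      · constructor
        · rintro rfl h
          exact neg_sat_nes cI pI uI _ hneg w (nes_sat cI pI vI _ w h)
        · rintro rfl h
          exact neg_sat_nes cI pI vI _ hneg w (nes_sat cI pI uI _ w h)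
      · simp only [Fml.polNN, if_neg hneg] at hblk
        have hA := ihA (!b) (fun x hx => hqv x (List.mem_append_left _ hx))
          (fun a ha => hblk a (Or.inl ha)) w hw
        have hB := ihB b (fun x hx => hqv x (List.mem_append_right _ hx))
          (fun a ha => hblk a (Or.inr ha)) w hw
        constructor
        · rintro rfl h
          exact ⟨fun hAu => hB.1 rfl (h.1 (hA.2 rfl hAu)), h.2⟩
        · rintro rfl h
          exact ⟨fun hAv => hB.2 rfl (h.1 (hA.1 rfl hAv)), h.2⟩
  | all x A ih =>
      intro b hqv hblk w hw
      by_cases hneg : (Fml.all x A).isNegativeB = true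
      · constructor
        · rintro rfl h
          exact neg_sat_nes cI pI uI _ hneg w (nes_sat cI pI vI _ w h)
        · rintro rfl h
          exact neg_sat_nes cI pI vI _ hneg w (nes_sat cI pI uI _ w h)
      · simp only [Fml.polNN, if_neg hneg] at hblk
        have hx : x ∈ X := hqv x (List.mem_cons_self)
        have hstep : ∀ d : D, ∀ y, y ∉ X → Function.update w x d y = w0 y := by
          intro d y hy
          rw [Function.update_of_ne (fun h => hy (by rw [h]; exact hx))]
          exact hw y hy
        constructor
        · rintro rfl h d
          exact (ih true (fun y hy => hqv y (List.mem_cons_of_mem _ hy)) hblk _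
            (hstep d)).1 rfl (h d)
        · rintro rfl h d
          exact (ih false (fun y hy => hqv y (List.mem_cons_of_mem _ hy)) hblk _
            (hstep d)).2 rfl (h d)
  | ex x A ih =>
      intro b hqv hblk w hw
      by_cases hneg : (Fml.ex x A).isNegativeB = true
      · constructor
        · rintro rfl h
          exact neg_sat_nes cI pI uI _ hneg w (nes_sat cI pI vI _ w h)
        · rintro rfl h
          exact neg_sat_nes cI pI vI _ hneg w (nes_sat cI pI uI _ w h)
      · simp only [Fml.polNN, if_neg hneg] at hblk
        have hx : x ∈ X := hqv x (List.mem_cons_self)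
        have hstep : ∀ d : D, ∀ y, y ∉ X → Function.update w x d y = w0 y := by
          intro d y hy
          rw [Function.update_of_ne (fun h => hy (by rw [h]; exact hx))]
          exact hw y hy
        constructor
        · rintro rfl h
          obtain ⟨d, hd⟩ := h
          exact ⟨d, (ih true (fun y hy => hqv y (List.mem_cons_of_mem _ hy)) hblk _
            (hstep d)).1 rfl hd⟩
        · rintro rfl h
          obtain ⟨d, hd⟩ := h
          exact ⟨d, (ih false (fun y hy => hqv y (List.mem_cons_of_mem _ hy)) hblk _
            (hstep d)).2 rfl hd⟩

/-- The key lemma: absence of `E_F(v,u)`-edges propagates `NES` from `u` down to `v ≤ u`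
at strictly positive positions. -/
lemma sp_lemma (cI : C → D) (pI uI vI : PredI P ar D)
    (hle : ∀ p xs, vI p xs → uI p xs) (F : Fml C P ar)
    (hNoE : ∀ a b : Atom C P ar, F.depends a b → ∀ θ : ℕ → D,
      ¬ (vI a.1 (fun i => (a.2 i).eval cI θ) ∧ uI b.1 (fun i => (b.2 i).eval cI θ) ∧
         ¬ vI b.1 (fun i => (b.2 i).eval cI θ))) :
    ∀ (G : Fml C P ar), G.spImps ⊆ F.spImps → G.quantVars.Nodup →
    (∀ x ∈ G.quantVars, x ∉ G.freeVars) →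
    ∀ w : ℕ → D, Fml.satNES cI pI uI G w → Fml.satNES cI pI vI G w := by
  intro G
  induction G with
  | atom p t =>
      intro _ _ _ w h
      exact ⟨h.1, fun hv => h.2 (hle _ _ hv)⟩
  | eq t₁ t₂ => intro _ _ _ w h; exact h
  | bot => intro _ _ _ w h; exact h
  | and A B ihA ihB =>
      intro hsp hnd hdisj w h
      have hndA : A.quantVars.Nodup := (List.nodup_append.mp hnd).1
      have hndB : B.quantVars.Nodup := (List.nodup_append.mp hnd).2.1
      refine ⟨ihA (fun z hz => hsp (Or.inl hz)) hndA ?_ w h.1,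
              ihB (fun z hz => hsp (Or.inr hz)) hndB ?_ w h.2⟩
      · intro x hx hxf
        exact hdisj x (List.mem_append_left _ hx) (Or.inl hxf)
      · intro x hx hxf
        exact hdisj x (List.mem_append_right _ hx) (Or.inr hxf)
  | or A B ihA ihB =>
      intro hsp hnd hdisj w h
      have hndA : A.quantVars.Nodup := (List.nodup_append.mp hnd).1
      have hndB : B.quantVars.Nodup := (List.nodup_append.mp hnd).2.1
      rcases h with h | h
      · refine Or.inl (ihA (fun z hz => hsp (Or.inl hz)) hndA ?_ w h)
        intro x hx hxf
        exact hdisj x (List.mem_append_left _ hx) (Or.inl hxf)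
      · refine Or.inr (ihB (fun z hz => hsp (Or.inr hz)) hndB ?_ w h)
        intro x hx hxf
        exact hdisj x (List.mem_append_right _ hx) (Or.inr hxf)
  | all x A ih =>
      intro hsp hnd hdisj w h d
      have hx : x ∉ A.quantVars := (List.nodup_cons.mp hnd).1
      refine ih hsp (List.nodup_cons.mp hnd).2 ?_ _ (h d)
      intro y hy hyf
      have hyx : y ≠ x := fun h' => hx (h' ▸ hy)
      exact hdisj y (List.mem_cons_of_mem _ hy) ⟨hyf, hyx⟩
  | ex x A ih =>
      intro hsp hnd hdisj w h
      obtain ⟨d, hd⟩ := h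
      have hx : x ∉ A.quantVars := (List.nodup_cons.mp hnd).1
      refine ⟨d, ih hsp (List.nodup_cons.mp hnd).2 ?_ _ hd⟩
      intro y hy hyf
      have hyx : y ≠ x := fun h' => hx (h' ▸ hy)
      exact hdisj y (List.mem_cons_of_mem _ hy) ⟨hyf, hyx⟩
  | imp A B ihA ihB =>
      intro hsp hnd hdisj w hu
      have hmem : (A, B) ∈ F.spImps := hsp (Set.mem_insert _ _)
      have hndA : A.quantVars.Nodup := (List.nodup_append.mp hnd).1
      have hndB : B.quantVars.Nodup := (List.nodup_append.mp hnd).2.1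
      have hqvdisj : ∀ y ∈ A.quantVars, y ∉ B.quantVars :=
        (List.nodup_append'.mp hnd).2.2
      have hdisjB : ∀ y ∈ B.quantVars, y ∉ B.freeVars := by
        intro y hy hyf
        exact hdisj y (List.mem_append_right _ hy) (Or.inr hyf)
      refine ⟨?_, hu.2⟩
      intro hAv
      have hBsat : Fml.sat cI pI B w := hu.2 (nes_sat cI pI vI A w hAv)
      by_cases hc : ∃ a ∈ B.spAtoms, ∃ θ : ℕ → D,
          (∀ y, y ∉ {z | z ∈ B.quantVars} → θ y = w y) ∧
          vI a.1 (fun i => (a.2 i).eval cI θ)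
      · -- some strictly positive atom of B is in v: use the no-edge hypothesis
        obtain ⟨a, ha, θa, hθa, hva⟩ := hc
        -- hygiene
        have hvarsB : ∀ a' ∈ B.spAtoms, ∀ y ∈ Atom.vars a', y ∉ A.quantVars := by
          intro a' ha' y hy hyA
          rcases spAtoms_vars B a' ha' y hy with h | h
          · exact hdisj y (List.mem_append_left _ hyA) (Or.inr h)
          · exact hqvdisj y hyA h
        have hvarsA : ∀ b' ∈ Fml.polNN true A, ∀ y ∈ Atom.vars b', y ∉ B.quantVars := by
          intro b' hb' y hy hyB
          rcases polNN_vars A true b' hb' y hy with h | h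
          · exact hdisj y (List.mem_append_right _ hyB) (Or.inl h)
          · exact hqvdisj y h hyB
        have hblkA : ∀ b' ∈ Fml.polNN true A, ∀ θb : ℕ → D,
            (∀ y, y ∉ {z | z ∈ A.quantVars} → θb y = w y) →
            ¬ (uI b'.1 (fun i => (b'.2 i).eval cI θb) ∧
               ¬ vI b'.1 (fun i => (b'.2 i).eval cI θb)) := by
          intro b' hb' θb hθb hcon
          classical
          set θ : ℕ → D := fun y => if y ∈ B.quantVars then θa y else θb y with hθdef
          have hea : (fun i => (a.2 i).eval cI θ) = (fun i => (a.2 i).eval cI θa) := by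
            apply evalCongr
            intro y hy
            by_cases hyB : y ∈ B.quantVars
            · simp [hθdef, hyB]
            · have h1 : θb y = w y := hθb y (hvarsB a ha y hy)
              have h2 : θa y = w y := hθa y hyB
              simp [hθdef, hyB, h1, h2]
          have heb : (fun i => (b'.2 i).eval cI θ) = (fun i => (b'.2 i).eval cI θb) := by
            apply evalCongr
            intro y hy
            have hyB : y ∉ B.quantVars := hvarsA b' hb' y hy
            simp [hθdef, hyB]
          apply hNoE a b' ⟨(A, B), hmem, ha, hb'⟩ θ
          refine ⟨?_, ?_, ?_⟩
          · rw [hea]; exact hva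
          · rw [heb]; exact hcon.1
          · rw [heb]; exact hcon.2
        have hAu : Fml.satNES cI pI uI A w :=
          (rev_main cI pI uI vI hle {z | z ∈ A.quantVars} w A true
            (fun y hy => hy) hblkA w (fun _ _ => rfl)).1 rfl hAv
        have hBu : Fml.satNES cI pI uI B w := hu.1 hAu
        exact ihB (fun z hz => hsp (Set.mem_insert_of_mem _ hz)) hndB hdisjB w hBu
      · -- no strictly positive atom of B is in v: NES_B(v) from B's truth
        push_neg at hc
        exact satP cI pI vI {z | z ∈ B.quantVars} w B (fun y hy => hy)
          (fun a ha θ hθ => hc a ha θ hθ) w (fun _ _ => rfl) hBsat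


/-- Proposition 2': for any sentence `F` in rectified form, `SM[F]` is
equivalent to `F ∧ ∀u((u ≤ p) ∧ Loop_F(u) → ¬NES_F(u))`. -/
theorem statement_1 {C P D : Type} {ar : P → ℕ} [Nonempty D]
    (cI : C → D) (pI : PredI P ar D) (F : Fml C P ar)
    (hsent : F.freeVars = ∅) (hrect : F.rectified) (hpreds : ∀ p : P, p ∈ F.preds) :
    satSM cI pI F ↔
      (F.satSent cI pI ∧
        ∀ uI : PredI P ar D, PredI.le uI pI → satLoopF cI F uI →
          ¬ ∀ v : ℕ → D, F.satNES cI pI uI v) := by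
  classical
  constructor
  · rintro ⟨hF, hns⟩
    refine ⟨hF, ?_⟩
    intro uI hule hloop hnes
    apply hns
    refine ⟨fun p xs => pI p xs ∧ ¬ uI p xs, ⟨fun p xs h => h.1, ?_⟩, ?_⟩
    · -- not equivalent to pI, since uI is nonempty
      have hne : PredI.nonemp uI := by
        rcases hloop with h | h
        · exact h.1
        · exact h.1
      obtain ⟨p, xs, hu⟩ := hne
      intro heq
      have hp : pI p xs := hule p xs hu
      exact ((heq p xs).mpr hp).2 hu
    · intro v
      exact (nes_iff_star cI pI uI F v).mp (hnes v)
  · rintro ⟨hF, hloopcond⟩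
    refine ⟨hF, ?_⟩
    rintro ⟨wI, ⟨hwle, hwne⟩, hstar⟩
    set uI : PredI P ar D := fun p xs => pI p xs ∧ ¬ wI p xs with huI
    have hwEq : (fun p xs => pI p xs ∧ ¬ uI p xs) = wI := by
      funext p xs
      apply propext
      constructor
      · rintro ⟨hp, hn⟩
        by_contra hw
        exact hn ⟨hp, hw⟩
      · intro hw
        exact ⟨hwle p xs hw, fun h => h.2 hw⟩
    have hnes : ∀ v : ℕ → D, F.satNES cI pI uI v := by
      intro v
      rw [nes_iff_star, hwEq]
      exact hstar v
    have hune : PredI.nonemp uI := by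
      by_contra hne
      apply hwne
      intro p xs
      refine ⟨hwle p xs, ?_⟩
      intro hp
      by_contra hw
      exact hne ⟨p, xs, hp, hw⟩
    have hule : PredI.le uI pI := fun p xs h => h.1
    by_cases hA : ∃ vI : PredI P ar D, PredI.le vI uI ∧ satSC cI F vI ∧
        ∀ v : ℕ → D, F.satNES cI pI vI v
    · obtain ⟨vI, hvu, hsc, hvnes⟩ := hA
      exact hloopcond vI (fun p xs h => hule p xs (hvu p xs h)) (Or.inl hsc) hvnes
    · apply hloopcond uI hule ?_ hnes
      right
      refine ⟨hune, ?_⟩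
      intro vI hvle hsc
      by_contra hnoE
      apply hA
      refine ⟨vI, hvle, hsc, ?_⟩
      intro v
      exact sp_lemma cI pI uI vI hvle F
        (fun a b hd θ h => hnoE ⟨a, b, hd, θ, h.1, h.2.1, h.2.2⟩)
        F (fun z hz => hz) hrect.1 hrect.2 v (hnes v)

end SMLF
end

section
/- For any propositional formula F, the following conditions are equivalent to each other under the assumption F (i.e., every truth assignment satisfying F satisfies one iff it satisfies the others): (a) SM[F]; (b) the conjunction of the formulas ⋀Y → ¬NES_F(Y⃗) for all nonempty sets Y of atoms occurring in F; (c) the conjunction of the formulas ⋀Y → ¬NES_F(Y⃗) for all loops Y of F. -/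
set_option linter.unusedVariables false

namespace SMLF

variable {C P D : Type} {ar : P → ℕ}

/-! ### Propositional formulas -/

namespace Prp

inductive PFml (A : Type) where
  | atom : A → PFml A
  | bot : PFml A
  | and : PFml A → PFml A → PFml A
  | or : PFml A → PFml A → PFml A
  | imp : PFml A → PFml A → PFml A

variable {A : Type}

def PFml.sat (V : A → Prop) : PFml A → Prop
  | .atom a => V a
  | .bot => False
  | .and F G => F.sat V ∧ G.sat V
  | .or F G => F.sat V ∨ G.sat V
  | .imp F G => F.sat V → G.sat V

def PFml.satStar (V U : A → Prop) : PFml A → Prop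
  | .atom a => U a
  | .bot => False
  | .and F G => F.satStar V U ∧ G.satStar V U
  | .or F G => F.satStar V U ∨ G.satStar V U
  | .imp F G => (F.satStar V U → G.satStar V U) ∧ (F.sat V → G.sat V)

def PFml.satNES (V U : A → Prop) : PFml A → Prop
  | .atom a => V a ∧ ¬ U a
  | .bot => False
  | .and F G => F.satNES V U ∧ G.satNES V U
  | .or F G => F.satNES V U ∨ G.satNES V U
  | .imp F G => (F.satNES V U → G.satNES V U) ∧ (F.sat V → G.sat V)

def PFml.atoms : PFml A → Set A
  | .atom a => {a}
  | .bot => ∅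
  | .and F G => F.atoms ∪ G.atoms
  | .or F G => F.atoms ∪ G.atoms
  | .imp F G => F.atoms ∪ G.atoms

/-- `V ⊨ SM[F]` : `F ∧ ¬∃u((u < p) ∧ F*(u))`. -/
def satSM (V : A → Prop) (F : PFml A) : Prop :=
  F.sat V ∧ ¬ ∃ U : A → Prop,
    ((∀ a, U a → V a) ∧ ¬ (∀ a, U a ↔ V a)) ∧ F.satStar V U

def PFml.isNegativeB : PFml A → Bool
  | .atom _ => false
  | .bot => true
  | .and F G => F.isNegativeB && G.isNegativeB
  | .or F G => F.isNegativeB && G.isNegativeB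
  | .imp _ G => G.isNegativeB

def PFml.spAtoms : PFml A → Set A
  | .atom a => {a}
  | .bot => ∅
  | .and F G => F.spAtoms ∪ G.spAtoms
  | .or F G => F.spAtoms ∪ G.spAtoms
  | .imp _ G => G.spAtoms

def PFml.spImps : PFml A → Set (PFml A × PFml A)
  | .atom _ => ∅
  | .bot => ∅
  | .and F G => F.spImps ∪ G.spImps
  | .or F G => F.spImps ∪ G.spImps
  | .imp F G => insert (F, G) G.spImps

/-- Atoms with an occurrence of polarity `b` not belonging to any negative subformula. -/
def PFml.polNN : Bool → PFml A → Set A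
  | true, .atom a => {a}
  | false, .atom _ => ∅
  | _, .bot => ∅
  | b, .and F G => if (PFml.and F G).isNegativeB then ∅ else PFml.polNN b F ∪ PFml.polNN b G
  | b, .or F G => if (PFml.or F G).isNegativeB then ∅ else PFml.polNN b F ∪ PFml.polNN b G
  | b, .imp F G => if (PFml.imp F G).isNegativeB then ∅ else PFml.polNN (!b) F ∪ PFml.polNN b G

/-- `a` depends on `b` in `F`. -/
def PFml.depends (F : PFml A) (a b : A) : Prop :=
  ∃ GH ∈ F.spImps, a ∈ (Prod.snd GH).spAtoms ∧ b ∈ PFml.polNN true (Prod.fst GH)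

/-- A loop of `F`: a nonempty set of atoms of `F` inducing a strongly connected
subgraph of the dependency graph of `F`. -/
def PFml.isLoop (F : PFml A) (Y : Set A) : Prop :=
  Y.Nonempty ∧ Y ⊆ F.atoms ∧ SMLF.SCin F.depends Y

end Prp

/-! For `U ≤ V`, `F*(U)` is `NES_F(V \ U)`, so (a) and (b) say the same thing once `F` holds.
For (c), take a minimal nonempty `Y ⊆ atoms F` with `NES_F(Y)`. If `Y` were not strongly
connected, the atoms `R` reachable inside `Y` from one of them would form a proper subset with
no dependency edge from `R` to `Y \ R`, and `NES_F(Y)` would imply `NES_F(R)`: at an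
implication `G → H` where `NES_G(R)` holds but `NES_G(Y)` fails, an atom of `Y \ R` has a
positive occurrence in `G` outside negative subformulas, so `H` has no strictly positive
occurrence of an atom of `R`, and then `NES_H(R)` follows from `H` itself. -/

theorem exists_ssubset_closed_of_not_SCin {α : Type} {E : α → α → Prop} {Z : Set α}
    (h : ¬ SCin E Z) : ∃ R ⊂ Z, R.Nonempty ∧ ∀ a ∈ R, ∀ b ∈ Z \ R, ¬ E a b := by
  simp only [SCin, not_forall] at h
  obtain ⟨a, ha, b, hb, hab⟩ := h
  let R := {c ∈ Z | Relation.ReflTransGen (fun x y => x ∈ Z ∧ y ∈ Z ∧ E x y) a c}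
  refine ⟨R, ?_, ⟨a, ha, .refl⟩, ?_⟩
  · exact Set.ssubset_iff_of_subset (fun _ hc => hc.1) |>.2 ⟨b, hb, fun hbR => hab hbR.2⟩
  · rintro c ⟨hc, hac⟩ d ⟨hd, hdR⟩ hcd
    exact hdR ⟨hd, hac.tail ⟨hc, hd, hcd⟩⟩

namespace Prp

variable {A : Type} {V : A → Prop}

theorem PFml.atoms_finite (F : PFml A) : F.atoms.Finite := by
  induction F with
  | atom a => exact Set.finite_singleton a
  | bot => exact Set.finite_empty
  | and F G ihF ihG | or F G ihF ihG | imp F G ihF ihG => exact ihF.union ihG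

theorem PFml.sat_of_satNES {U : A → Prop} {F : PFml A} (h : F.satNES V U) : F.sat V := by
  induction F with
  | atom a => exact h.1
  | bot => exact h
  | and F G ihF ihG => exact ⟨ihF h.1, ihG h.2⟩
  | or F G ihF ihG => exact h.imp ihF ihG
  | imp F G ihF ihG => exact h.2

theorem PFml.satNES_iff_sat_of_isNegativeB {U : A → Prop} {F : PFml A}
    (hF : F.isNegativeB = true) : F.satNES V U ↔ F.sat V := by
  induction F with
  | atom a => simp [isNegativeB] at hF
  | bot => exact Iff.rfl
  | and F G ihF ihG =>
    simp only [isNegativeB, Bool.and_eq_true] at hF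
    exact and_congr (ihF hF.1) (ihG hF.2)
  | or F G ihF ihG =>
    simp only [isNegativeB, Bool.and_eq_true] at hF
    exact or_congr (ihF hF.1) (ihG hF.2)
  | imp F G ihF ihG =>
    exact ⟨And.right, fun h => ⟨fun hF' => (ihG hF).2 (h (sat_of_satNES hF')), h⟩⟩

theorem PFml.satNES_iff_satStar (U : A → Prop) (F : PFml A) :
    F.satNES V U ↔ F.satStar V (fun a => V a ∧ ¬ U a) := by
  induction F with
  | atom a | bot => exact Iff.rfl
  | and F G ihF ihG => exact and_congr ihF ihG
  | or F G ihF ihG => exact or_congr ihF ihG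
  | imp F G ihF ihG => exact and_congr (imp_congr ihF ihG) Iff.rfl

theorem PFml.satNES_of_sat_of_disjoint_spAtoms {Z : Set A} {F : PFml A} (hF : F.sat V)
    (hZ : Disjoint F.spAtoms Z) : F.satNES V (· ∈ Z) := by
  induction F with
  | atom a => exact ⟨hF, Set.disjoint_singleton_left.1 hZ⟩
  | bot => exact hF
  | and F G ihF ihG =>
    rw [spAtoms, Set.disjoint_union_left] at hZ
    exact ⟨ihF hF.1 hZ.1, ihG hF.2 hZ.2⟩
  | or F G ihF ihG =>
    rw [spAtoms, Set.disjoint_union_left] at hZ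
    exact hF.imp (ihF · hZ.1) (ihG · hZ.2)
  | imp F G ihF ihG => exact ⟨fun hF' => ihG (hF (sat_of_satNES hF')) hZ, hF⟩

theorem PFml.satNES_mono_of_disjoint_polNN {Z Y : Set A} (hZY : Z ⊆ Y) (F : PFml A) :
    (Disjoint (Y \ Z) (F.polNN true) → F.satNES V (· ∈ Z) → F.satNES V (· ∈ Y)) ∧
    (Disjoint (Y \ Z) (F.polNN false) → F.satNES V (· ∈ Y) → F.satNES V (· ∈ Z)) := by
  induction F with
  | atom a =>
    refine ⟨fun hd h => ⟨h.1, fun haY => ?_⟩, fun _ h => ⟨h.1, fun haZ => h.2 (hZY haZ)⟩⟩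
    exact Set.disjoint_singleton_right.1 hd ⟨haY, h.2⟩
  | bot => exact ⟨fun _ => id, fun _ => id⟩
  | and F G ihF ihG =>
    by_cases hneg : (PFml.and F G).isNegativeB
    · simp only [satNES_iff_sat_of_isNegativeB hneg]; exact ⟨fun _ => id, fun _ => id⟩
    simp only [polNN, hneg, Bool.false_eq_true, if_false, Set.disjoint_union_right]
    exact ⟨fun hd h => ⟨ihF.1 hd.1 h.1, ihG.1 hd.2 h.2⟩,
      fun hd h => ⟨ihF.2 hd.1 h.1, ihG.2 hd.2 h.2⟩⟩
  | or F G ihF ihG =>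
    by_cases hneg : (PFml.or F G).isNegativeB
    · simp only [satNES_iff_sat_of_isNegativeB hneg]; exact ⟨fun _ => id, fun _ => id⟩
    simp only [polNN, hneg, Bool.false_eq_true, if_false, Set.disjoint_union_right]
    exact ⟨fun hd h => h.imp (ihF.1 hd.1) (ihG.1 hd.2),
      fun hd h => h.imp (ihF.2 hd.1) (ihG.2 hd.2)⟩
  | imp F G ihF ihG =>
    by_cases hneg : (PFml.imp F G).isNegativeB
    · simp only [satNES_iff_sat_of_isNegativeB hneg]; exact ⟨fun _ => id, fun _ => id⟩
    simp only [polNN, hneg, Bool.false_eq_true, if_false, Set.disjoint_union_right,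
      Bool.not_true, Bool.not_false]
    exact ⟨fun hd h => ⟨fun hF => ihG.1 hd.2 (h.1 (ihF.2 hd.1 hF)), h.2⟩,
      fun hd h => ⟨fun hF => ihG.2 hd.2 (h.1 (ihF.1 hd.1 hF)), h.2⟩⟩

theorem PFml.satNES_of_forall_not_depends {Z Y : Set A} (hZY : Z ⊆ Y) {F : PFml A}
    (hclosed : ∀ a ∈ Z, ∀ b ∈ Y \ Z, ¬ F.depends a b) (h : F.satNES V (· ∈ Y)) :
    F.satNES V (· ∈ Z) := by
  suffices ∀ G : PFml A, G.spImps ⊆ F.spImps → G.satNES V (· ∈ Y) → G.satNES V (· ∈ Z) from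
    this F subset_rfl h
  intro G hGF hG
  induction G with
  | atom a => exact ⟨hG.1, fun haZ => hG.2 (hZY haZ)⟩
  | bot => exact hG
  | and G H ihG ihH =>
    exact ⟨ihG (Set.subset_union_left.trans hGF) hG.1,
      ihH (Set.subset_union_right.trans hGF) hG.2⟩
  | or G H ihG ihH =>
    exact hG.imp (ihG (Set.subset_union_left.trans hGF))
      (ihH (Set.subset_union_right.trans hGF))
  | imp G H ihG ihH =>
    refine ⟨fun hGZ => ?_, hG.2⟩
    by_cases hGY : G.satNES V (· ∈ Y)
    · exact ihH ((Set.subset_insert _ _).trans hGF) (hG.1 hGY)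
    obtain ⟨b, hb, hbG⟩ := Set.not_disjoint_iff.1
      fun hd => hGY ((satNES_mono_of_disjoint_polNN hZY G).1 hd hGZ)
    refine satNES_of_sat_of_disjoint_spAtoms (hG.2 (sat_of_satNES hGZ)) ?_
    exact Set.disjoint_left.2 fun a haH haZ =>
      hclosed a haZ b hb ⟨(G, H), hGF (Set.mem_insert _ _), haH, hbG⟩

theorem PFml.exists_isLoop_satNES_of_satNES {F : PFml A} {Y : Set A} (hY : Y.Nonempty)
    (hYF : Y ⊆ F.atoms) (h : F.satNES V (· ∈ Y)) :
    ∃ Z ⊆ Y, F.isLoop Z ∧ F.satNES V (· ∈ Z) := by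
  let S := {Z : Set A | Z.Nonempty ∧ Z ⊆ Y ∧ F.satNES V (· ∈ Z)}
  have hS : S.Finite :=
    (F.atoms_finite.subset hYF).finite_subsets.subset fun Z hZ => hZ.2.1
  obtain ⟨Z, hZmin⟩ := hS.exists_minimal ⟨Y, hY, subset_rfl, h⟩
  obtain ⟨hZ, hZY, hZnes⟩ := hZmin.prop
  refine ⟨Z, hZY, ⟨hZ, hZY.trans hYF, ?_⟩, hZnes⟩
  by_contra hsc
  obtain ⟨R, hRZ, hR, hclosed⟩ := exists_ssubset_closed_of_not_SCin hsc
  have hRS : R ∈ S :=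
    ⟨hR, hRZ.subset.trans hZY, satNES_of_forall_not_depends hRZ.subset hclosed hZnes⟩
  exact hRZ.not_subset (hZmin.le_of_le hRS hRZ.subset)

theorem satSM_iff_forall_not_satNES {F : PFml A} (hatoms : ∀ a, a ∈ F.atoms)
    (hV : F.sat V) :
    satSM V F ↔ ∀ Y : Set A, Y.Nonempty → Y ⊆ F.atoms →
      (∀ a ∈ Y, V a) → ¬ F.satNES V (· ∈ Y) := by
  constructor
  · rintro ⟨-, hmin⟩ Y ⟨a, ha⟩ - hVY hnes
    refine hmin ⟨fun b => V b ∧ b ∉ Y, ⟨fun b hb => hb.1, fun hUV => ?_⟩, ?_⟩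
    · exact ((hUV a).2 (hVY a ha)).2 ha
    · exact (F.satNES_iff_satStar _).1 hnes
  · refine fun hb => ⟨hV, ?_⟩
    rintro ⟨U, ⟨hUV, hne⟩, hstar⟩
    obtain ⟨a, ha⟩ : ∃ a, V a ∧ ¬ U a := by
      by_contra! h
      exact hne fun a => ⟨hUV a, h a⟩
    have hU : (fun b => V b ∧ ¬ (V b ∧ ¬ U b)) = U := by
      funext b
      exact propext ⟨fun hb => not_not.1 fun hUb => hb.2 ⟨hb.1, hUb⟩,
        fun hUb => ⟨hUV b hUb, fun hb => hb.2 hUb⟩⟩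
    refine hb {b | V b ∧ ¬ U b} ⟨a, ha⟩ (fun b _ => hatoms b) (fun b hb => hb.1) ?_
    rw [F.satNES_iff_satStar]
    simpa only [Set.mem_ofPred_eq, hU] using hstar

theorem forall_not_satNES_iff_forall_isLoop (F : PFml A) :
    (∀ Y : Set A, Y.Nonempty → Y ⊆ F.atoms → (∀ a ∈ Y, V a) → ¬ F.satNES V (· ∈ Y)) ↔
      ∀ Y : Set A, F.isLoop Y → (∀ a ∈ Y, V a) → ¬ F.satNES V (· ∈ Y) := by
  refine ⟨fun h Y hY => h Y hY.1 hY.2.1, fun h Y hY hYF hVY hnes => ?_⟩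
  obtain ⟨Z, hZY, hZ, hZnes⟩ := F.exists_isLoop_satNES_of_satNES hY hYF hnes
  exact h Z hZ (fun a ha => hVY a (hZY ha)) hZnes

end Prp

open Prp in
/-- for a propositional formula `F`, under the assumption `F`,
`SM[F]` is equivalent to the conjunction of `⋀Y → ¬NES_F(Y⃗)` for (b) all nonempty sets
`Y` of atoms occurring in `F`, and (c) all loops `Y` of `F`. -/
theorem statement_2 {A : Type} (F : Prp.PFml A) (hatoms : ∀ a : A, a ∈ F.atoms)
    (V : A → Prop) (hV : F.sat V) :
    (Prp.satSM V F ↔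
      ∀ Y : Set A, Y.Nonempty → Y ⊆ F.atoms →
        ((∀ a ∈ Y, V a) → ¬ F.satNES V (fun a => a ∈ Y))) ∧
    (Prp.satSM V F ↔
      ∀ Y : Set A, F.isLoop Y →
        ((∀ a ∈ Y, V a) → ¬ F.satNES V (fun a => a ∈ Y))) := by
  have hSM := satSM_iff_forall_not_satNES hatoms hV
  exact ⟨hSM, hSM.trans (forall_not_satNES_iff_forall_isLoop F)⟩

end SMLF
end

section
/- Let F be a first-order sentence in rectified form with predicate constants p = p1,…,pn, let I be an interpretation of its signature, and let q = q1,…,qn be a tuple of relations on the universe of I of the same arities as p. Then I satisfies SC_F(q) (with qi interpreting the second-order variables ui) if and only if the set Y = {pi(ξ⃗*) : qi(ξ⃗) = true, ξ⃗ a tuple of universe elements} is a loop of F with respect to I. -/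
set_option linter.unusedVariables false

namespace SMLF

variable {C P D : Type} {ar : P → ℕ}

/-! Identify a tuple `u` of relations with the set `u.atoms` of semantic atoms it makes true.
Then `v < u` says `v.atoms ⊂ u.atoms`, and `E_F(v,u)` says that some edge of the dependency
graph leads from `v.atoms` into `u.atoms \ v.atoms`. So `SC_F(q)` says that `Y = q.atoms` is
nonempty and every nonempty proper subset `Z` of `Y` has an edge into `Y \ Z`. That is strong
connectivity of the subgraph induced by `Y`: a path inside `Y` from `Z` to `Y \ Z` must leave `Z`
along such an edge, and conversely the atoms reachable inside `Y` from a fixed atom form a subset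
with no such edge, hence all of `Y`. -/

section InducedSubgraph

variable {V : Type} {E : V → V → Prop} {Y : Set V}

theorem SCin.exists_edge_out (h : SCin E Y) {Z : Set V} (hZY : Z ⊂ Y) (hZ : Z.Nonempty) :
    ∃ a ∈ Z, ∃ b ∈ Y \ Z, E a b := by
  obtain ⟨a, ha⟩ := hZ
  obtain ⟨b, hbY, hbZ⟩ := Set.exists_of_ssubset hZY
  have leaves : ∀ c, Relation.ReflTransGen (fun x y => x ∈ Y ∧ y ∈ Y ∧ E x y) a c →
      c ∉ Z → ∃ a ∈ Z, ∃ b ∈ Y \ Z, E a b := by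
    intro c hac
    induction hac with
    | refl => exact fun haZ => absurd ha haZ
    | @tail c d _ hcd ih =>
      intro hdZ
      by_cases hcZ : c ∈ Z
      · exact ⟨c, hcZ, d, ⟨hcd.2.1, hdZ⟩, hcd.2.2⟩
      · exact ih hcZ
  exact leaves b (h a (hZY.subset ha) b hbY) hbZ

theorem sCin_of_exists_edge_out
    (h : ∀ Z ⊂ Y, Z.Nonempty → ∃ a ∈ Z, ∃ b ∈ Y \ Z, E a b) : SCin E Y := by
  intro a ha b hb
  by_contra hab
  let reach : Set V := {c ∈ Y | Relation.ReflTransGen (fun x y => x ∈ Y ∧ y ∈ Y ∧ E x y) a c}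
  have hreach : reach ⊂ Y :=
    Set.ssubset_iff_subset_ne.mpr ⟨Set.sep_subset _ _, fun hY => hab (hY ▸ hb).2⟩
  obtain ⟨c, ⟨hcY, hac⟩, d, ⟨hdY, hd⟩, hcd⟩ := h reach hreach ⟨a, ha, .refl⟩
  exact hd ⟨hdY, hac.tail ⟨hcY, hdY, hcd⟩⟩

theorem sCin_iff_exists_edge_out :
    SCin E Y ↔ ∀ Z ⊂ Y, Z.Nonempty → ∃ a ∈ Z, ∃ b ∈ Y \ Z, E a b :=
  ⟨fun h _ hZY hZ => h.exists_edge_out hZY hZ, sCin_of_exists_edge_out⟩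

end InducedSubgraph

def PredI.atoms (u : PredI P ar D) : Set (SAtom P ar D) := {a | u a.1 a.2}

def PredI.ofAtoms (Z : Set (SAtom P ar D)) : PredI P ar D := fun p xs => ⟨p, xs⟩ ∈ Z

theorem PredI.nonemp_iff (u : PredI P ar D) : u.nonemp ↔ u.atoms.Nonempty :=
  ⟨fun ⟨p, xs, h⟩ => ⟨⟨p, xs⟩, h⟩, fun ⟨a, h⟩ => ⟨a.1, a.2, h⟩⟩

theorem PredI.lt_iff (v u : PredI P ar D) : PredI.lt v u ↔ v.atoms ⊂ u.atoms := by
  rw [Set.ssubset_def]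
  constructor
  · rintro ⟨hle, hne⟩
    exact ⟨fun a => hle a.1 a.2,
      fun hge => hne fun p xs => ⟨hle p xs, fun h => hge (a := ⟨p, xs⟩) h⟩⟩
  · rintro ⟨hle, hge⟩
    exact ⟨fun p xs h => hle (a := ⟨p, xs⟩) h, fun heq => hge fun a => (heq a.1 a.2).2⟩

theorem satE_iff (cI : C → D) (F : Fml C P ar) (v u : PredI P ar D) :
    satE cI F v u ↔ ∃ a ∈ v.atoms, ∃ b ∈ u.atoms \ v.atoms, edgeWrt cI F a b := by
  constructor
  · rintro ⟨a0, b0, hdep, θ, hv, hu, hnv⟩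
    exact ⟨_, hv, _, ⟨hu, hnv⟩, a0, b0, hdep, θ, rfl, rfl⟩
  · rintro ⟨_, hv, _, ⟨hu, hnv⟩, a0, b0, hdep, θ, rfl, rfl⟩
    exact ⟨a0, b0, hdep, θ, hv, hu, hnv⟩

theorem satSC_iff (cI : C → D) (F : Fml C P ar) (u : PredI P ar D) :
    satSC cI F u ↔ u.atoms.Nonempty ∧
      ∀ Z ⊂ u.atoms, Z.Nonempty → ∃ a ∈ Z, ∃ b ∈ u.atoms \ Z, edgeWrt cI F a b := by
  simp only [satSC, PredI.nonemp_iff, PredI.lt_iff, satE_iff]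
  exact and_congr_right fun _ => ⟨fun h Z => h (PredI.ofAtoms Z), fun h v => h v.atoms⟩

theorem statement_3_general {C P D : Type} {ar : P → ℕ}
    (cI : C → D) (F : Fml C P ar)
    (q : PredI P ar D) :
    satSC cI F q ↔ isLoopWrt cI F {a : SAtom P ar D | q a.1 a.2} := by
  rw [satSC_iff, isLoopWrt, sCin_iff_exists_edge_out]
  rfl

/-- Lemma 2: `I ⊨ SC_F(q)` iff
`Y = {pᵢ(ξ⃗*) : qᵢ(ξ⃗) = true}` is a loop of `F` w.r.t. `I`. -/
theorem statement_3 {C P D : Type} {ar : P → ℕ} [Nonempty D]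
    (cI : C → D) (F : Fml C P ar) (hrect : F.rectified)
    (q : PredI P ar D) :
    satSC cI F q ↔ isLoopWrt cI F {a : SAtom P ar D | q a.1 a.2} :=
  statement_3_general cI F q

end SMLF
end

section
/- Let F be a first-order sentence in rectified form with predicate constants p = p1,…,pn, let I be an interpretation of its signature, and let q = q1,…,qn be a tuple of relations on the universe of I of the same arities as p. Then I satisfies Nonempty(q) ∧ ∀v((v ≤ q) ∧ SC_F(v) → E_F(v,q)) if and only if the set Y = {pi(ξ⃗*) : qi(ξ⃗) = true, ξ⃗ a tuple of universe elements} is an unbounded set of F with respect to I. -/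
set_option linter.unusedVariables false

namespace SMLF

variable {C P D : Type} {ar : P → ℕ}

/-! Identify a tuple of relations `u` with the set of ground atoms `pᵢ(ξ⃗*)` it makes true.
Then `v ≤ u` and `v < u` become inclusion and strict inclusion, `E_F(v,u)` says that some edge of
the dependency graph leads from the atoms of `v` to the other atoms of `u`, and `SC_F(u)` says
that the atoms of `u` form a loop, because a set of vertices is strongly connected exactly when
every nonempty proper subset has an outgoing edge inside it. Under this dictionary the two
sides of the equivalence say the same thing. -/

theorem _root_.Relation.ReflTransGen.exists_step_out {α : Type} {r : α → α → Prop} {W : Set α}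
    {a b : α} (h : Relation.ReflTransGen r a b) (ha : a ∈ W) (hb : b ∉ W) :
    ∃ x ∈ W, ∃ y ∉ W, r x y := by
  induction h with
  | refl => exact absurd ha hb
  | @tail c b _ hcb ih =>
    by_cases hc : c ∈ W
    · exact ⟨c, hc, b, hb, hcb⟩
    · exact ih hc

theorem scin_iff_forall_ssubset_exists_edge {V : Type} (E : V → V → Prop) (Y : Set V) :
    SCin E Y ↔ ∀ W ⊂ Y, W.Nonempty → ∃ a ∈ W, ∃ b ∈ Y \ W, E a b := by
  constructor
  · rintro hY W hWY ⟨a, haW⟩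
    obtain ⟨b, hbY, hbW⟩ := Set.exists_of_ssubset hWY
    obtain ⟨x, hxW, y, hyW, -, hyY, hxy⟩ :=
      (hY a (hWY.subset haW) b hbY).exists_step_out haW hbW
    exact ⟨x, hxW, y, ⟨hyY, hyW⟩, hxy⟩
  · intro h a haY b hbY
    by_contra hab
    -- the vertices of `Y` reachable from `a` inside `Y` form a proper subset with no edge out
    let W := {x | x ∈ Y ∧ Relation.ReflTransGen (fun x y => x ∈ Y ∧ y ∈ Y ∧ E x y) a x}
    have hWY : W ⊂ Y := Set.ssubset_iff_subset_ne.2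
      ⟨fun x hx => hx.1, fun hWY => hab (hWY ▸ hbY : b ∈ W).2⟩
    obtain ⟨x, hxW, y, hy, hxy⟩ := h W hWY ⟨a, haY, .refl⟩
    exact hy.2 ⟨hy.1, hxW.2.tail ⟨hxW.1, hy.1, hxy⟩⟩

namespace PredI

variable {P D : Type} {ar : P → ℕ} {u v : PredI P ar D}

def atoms_s4 (u : PredI P ar D) : Set (SAtom P ar D) := {a | u a.1 a.2}

def ofAtoms_s4 (Y : Set (SAtom P ar D)) : PredI P ar D := fun p xs => ⟨p, xs⟩ ∈ Y

@[simp]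
theorem atoms_ofAtoms (Y : Set (SAtom P ar D)) : (ofAtoms_s4 Y).atoms_s4 = Y := rfl

theorem nonemp_iff_atoms_nonempty : u.nonemp ↔ u.atoms_s4.Nonempty :=
  ⟨fun ⟨p, xs, h⟩ => ⟨⟨p, xs⟩, h⟩, fun ⟨a, h⟩ => ⟨a.1, a.2, h⟩⟩

theorem le_iff_atoms_subset : u.le v ↔ u.atoms_s4 ⊆ v.atoms_s4 :=
  ⟨fun h a => h a.1 a.2, fun h p xs => @h ⟨p, xs⟩⟩

theorem eqv_iff_atoms_eq : u.eqv v ↔ u.atoms_s4 = v.atoms_s4 :=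
  ⟨fun h => Set.ext fun a => h a.1 a.2, fun h p xs => Set.ext_iff.1 h ⟨p, xs⟩⟩

theorem lt_iff_atoms_ssubset : u.lt v ↔ u.atoms_s4 ⊂ v.atoms_s4 := by
  rw [Set.ssubset_iff_subset_ne, ← le_iff_atoms_subset, Ne, ← eqv_iff_atoms_eq]
  rfl

end PredI

section DependencyGraph

variable {C P D : Type} {ar : P → ℕ} (cI : C → D) (F : Fml C P ar)

theorem satE_iff_exists_edgeWrt (v u : PredI P ar D) :
    satE cI F v u ↔ ∃ a ∈ v.atoms_s4, ∃ b ∈ u.atoms_s4 \ v.atoms_s4, edgeWrt cI F a b := by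
  constructor
  · rintro ⟨a₀, b₀, hdep, θ, ha, hb, hbv⟩
    exact ⟨_, ha, _, ⟨hb, hbv⟩, a₀, b₀, hdep, θ, rfl, rfl⟩
  · rintro ⟨a, ha, b, hb, a₀, b₀, hdep, θ, rfl, rfl⟩
    exact ⟨a₀, b₀, hdep, θ, ha, hb.1, hb.2⟩

theorem satSC_iff_isLoopWrt (u : PredI P ar D) : satSC cI F u ↔ isLoopWrt cI F u.atoms_s4 := by
  rw [satSC, isLoopWrt, PredI.nonemp_iff_atoms_nonempty, scin_iff_forall_ssubset_exists_edge]
  refine and_congr_right fun _ => ⟨fun h W hW hWne => ?_, fun h v hv hvne => ?_⟩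
  · simpa only [satE_iff_exists_edgeWrt, PredI.atoms_ofAtoms] using
      h (PredI.ofAtoms_s4 W) (PredI.lt_iff_atoms_ssubset.2 hW)
        (PredI.nonemp_iff_atoms_nonempty.2 hWne)
  · exact (satE_iff_exists_edgeWrt cI F v u).2
      (h _ (PredI.lt_iff_atoms_ssubset.1 hv) (PredI.nonemp_iff_atoms_nonempty.1 hvne))

end DependencyGraph

theorem statement_4_general {C P D : Type} {ar : P → ℕ}
    (cI : C → D) (F : Fml C P ar)
    (q : PredI P ar D) :
    (PredI.nonemp q ∧
      ∀ vI : PredI P ar D, PredI.le vI q → satSC cI F vI → satE cI F vI q) ↔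
      isUnboundedWrt cI F {a : SAtom P ar D | q a.1 a.2} := by
  change _ ↔ isUnboundedWrt cI F q.atoms_s4
  refine and_congr PredI.nonemp_iff_atoms_nonempty
    ⟨fun h Z hZ hZne hZsc => ?_, fun h v hv hsc => ?_⟩
  · have hZloop : satSC cI F (PredI.ofAtoms_s4 Z) := (satSC_iff_isLoopWrt cI F _).2 ⟨hZne, hZsc⟩
    exact (satE_iff_exists_edgeWrt cI F _ q).1
      (h (PredI.ofAtoms_s4 Z) (PredI.le_iff_atoms_subset.2 hZ) hZloop)
  · obtain ⟨hne, hsc⟩ := (satSC_iff_isLoopWrt cI F v).1 hsc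
    exact (satE_iff_exists_edgeWrt cI F v q).2 (h _ (PredI.le_iff_atoms_subset.1 hv) hne hsc)

/-- Lemma 3: `I ⊨ Nonempty(q) ∧ ∀v((v ≤ q) ∧ SC_F(v) → E_F(v,q))` iff
`Y = {pᵢ(ξ⃗*) : qᵢ(ξ⃗) = true}` is an unbounded set of `F` w.r.t. `I`. -/
theorem statement_4 {C P D : Type} {ar : P → ℕ} [Nonempty D]
    (cI : C → D) (F : Fml C P ar) (hrect : F.rectified)
    (q : PredI P ar D) :
    (PredI.nonemp q ∧
      ∀ vI : PredI P ar D, PredI.le vI q → satSC cI F vI → satE cI F vI q) ↔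
      isUnboundedWrt cI F {a : SAtom P ar D | q a.1 a.2} :=
  statement_4_general cI F q

end SMLF
end
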